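/- arXiv:1103.0762 — 5 statements merged into one kernel-verified Lean document; each statement's English description precedes it below -/
import Mathlib

section
/- Let W : (ℂ*)^n → ℂ be defined by W(x₁,…,xₙ) = Σⱼ xⱼ + Σⱼ 1/xⱼ + Πⱼ xⱼ + Πⱼ 1/xⱼ (the superpotential of the n-dimensional del Pezzo polytope). If (x₁,…,xₙ) is a critical point of W (i.e., all partial derivatives vanish), then setting Z = Πⱼ xⱼ, each coordinate xₖ satisfies the quadratic equation xₖ² + (Z − 1/Z)xₖ − 1 = 0. -/
open Finset

/-- With `a = xₖ` and `P = ∏_{j ≠ k} xⱼ`, so that `Z = a * P`, the quadratic of the theorem is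
`xₖ²` times `∂W/∂xₖ`. -/
theorem sq_add_sub_inv_mul_sub_one_eq {K : Type*} [Field K] {a : K} (ha : a ≠ 0) (P : K) :
    a ^ 2 + (a * P - 1 / (a * P)) * a - 1
      = a ^ 2 * (1 - 1 / a ^ 2 + P - 1 / a ^ 2 * P⁻¹) := by
  have h : a * a⁻¹ = 1 := mul_inv_cancel₀ ha
  rw [one_div, one_div, mul_inv]
  linear_combination (a * a⁻¹ + 1 + P⁻¹ * (a * a⁻¹)) * h

/-- at a critical point of the del Pezzo superpotential
`W = Σ xⱼ + Σ 1/xⱼ + Π xⱼ + Π 1/xⱼ`, each coordinate satisfies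
`xₖ² + (Z − 1/Z)xₖ − 1 = 0` where `Z = Π xⱼ`. -/
theorem stmt_2 (n : ℕ) (x : Fin n → ℂ) (hx : ∀ j, x j ≠ 0)
    (hcrit : ∀ k, (1 : ℂ) - 1 / (x k) ^ 2 + (∏ j ∈ univ.erase k, x j)
      - (1 / (x k) ^ 2) * ∏ j ∈ univ.erase k, (x j)⁻¹ = 0) :
    ∀ k, (x k) ^ 2 + ((∏ j, x j) - 1 / ∏ j, x j) * x k - 1 = 0 := by
  intro k
  rw [← mul_prod_erase univ x (mem_univ k), sq_add_sub_inv_mul_sub_one_eq (hx k),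
    ← prod_inv_distrib, hcrit k, mul_zero]
end

section
/- Let n be even, 0 ≤ L ≤ n, and A ∈ ℂ* with A^(2L−n−1) = (−1)^(L−1) and 2L ≠ n + 1. Then with a, b, f, h, d as in the del Pezzo Hessian (a = 2/A³ + 2(−1)^L A^(n−2L−2), b = −2A³ + 2(−1)^L A^(n−2L+2), f = (−1)^L(A^(2L−n−2) + A^(n−2L−2)), h = (−1)^L(A^(2L−n+2) + A^(n−2L+2)), d = (−1)^(L−1)(A^(2L−n) + A^(n−2L))), one has a − f = 1/A + 1/A³ ≠ 0 and b − h = −A³ − A ≠ 0. -/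
/-- for the del Pezzo Hessian entries, `a − f = 1/A + 1/A³ ≠ 0`
and `b − h = −A³ − A ≠ 0`, where `A^(2L−n−1) = (−1)^(L−1)`, `n` even,
`2L ≠ n + 1`. -/
theorem stmt_14 (n L : ℕ) (hn : Even n) (hL : L ≤ n)
    (hne : 2 * (L : ℤ) ≠ (n : ℤ) + 1) (A : ℂ) (hA : A ≠ 0)
    (hroot : A ^ (2 * (L : ℤ) - n - 1) = (-1 : ℂ) ^ (L + 1))
    (a b f h d : ℂ)
    (ha : a = 2 / A ^ 3 + 2 * (-1 : ℂ) ^ L * A ^ ((n : ℤ) - 2 * L - 2))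
    (hb : b = -2 * A ^ 3 + 2 * (-1 : ℂ) ^ L * A ^ ((n : ℤ) - 2 * L + 2))
    (hf : f = (-1 : ℂ) ^ L * (A ^ (2 * (L : ℤ) - n - 2) + A ^ ((n : ℤ) - 2 * L - 2)))
    (hh : h = (-1 : ℂ) ^ L * (A ^ (2 * (L : ℤ) - n + 2) + A ^ ((n : ℤ) - 2 * L + 2)))
    (hd : d = (-1 : ℂ) ^ (L + 1) * (A ^ (2 * (L : ℤ) - n) + A ^ ((n : ℤ) - 2 * L))) :
    a - f = 1 / A + 1 / A ^ 3 ∧ a - f ≠ 0 ∧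
    b - h = -A ^ 3 - A ∧ b - h ≠ 0 := by
  set e : ℤ := 2 * (L : ℤ) - n - 1 with he
  set s : ℂ := (-1 : ℂ) ^ L with hsdef
  have hs2 : s * s = 1 := by
    rw [hsdef, ← pow_add]; exact Even.neg_one_pow ⟨L, rfl⟩
  have hs' : (-1 : ℂ) ^ (L + 1) = -s := by rw [hsdef, pow_succ]; ring
  have hAe : A ^ e = -s := by rw [hroot, hs']
  have hsinv : s⁻¹ = s := inv_eq_of_mul_eq_one_right hs2
  have hAeinv : A ^ (-e) = -s := by
    rw [zpow_neg, hAe, inv_neg, hsinv]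
  have hz3 : A ^ (3 : ℤ) = A ^ (3 : ℕ) := by norm_cast
  -- key power identities
  have h1 : A ^ (2 * (L : ℤ) - n - 2) = -s * A⁻¹ := by
    rw [show 2 * (L : ℤ) - n - 2 = e + (-1) by rw [he]; ring,
      zpow_add₀ hA, hAe, zpow_neg_one]
  have h2 : A ^ ((n : ℤ) - 2 * L - 2) = -s * (A ^ 3)⁻¹ := by
    rw [show (n : ℤ) - 2 * L - 2 = (-e) + (-3) by rw [he]; ring,
      zpow_add₀ hA, hAeinv, show ((-3 : ℤ)) = -(3 : ℤ) by norm_num,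
      zpow_neg, hz3]
  have h3 : A ^ (2 * (L : ℤ) - n + 2) = -s * A ^ 3 := by
    rw [show 2 * (L : ℤ) - n + 2 = e + 3 by rw [he]; ring, zpow_add₀ hA, hAe, hz3]
  have h4 : A ^ ((n : ℤ) - 2 * L + 2) = -s * A := by
    rw [show (n : ℤ) - 2 * L + 2 = (-e) + 1 by rw [he]; ring,
      zpow_add₀ hA, hAeinv, zpow_one]
  -- A^2 + 1 ≠ 0
  have hA2 : A ^ 2 + 1 ≠ 0 := by
    intro hc
    have hA2' : A ^ (2 : ℤ) = -1 := by
      rw [show ((2 : ℤ)) = ((2 : ℕ) : ℤ) by norm_num, zpow_natCast]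
      linear_combination hc
    have hodd : Odd e := by
      obtain ⟨m, hm⟩ := hn
      exact ⟨(L : ℤ) - m - 1, by rw [he]; push_cast [hm]; ring⟩
    have h5 : A ^ (2 * e) = 1 := by
      rw [mul_comm, zpow_mul, hAe, show ((2 : ℤ)) = ((2 : ℕ) : ℤ) by norm_num,
        zpow_natCast]
      calc (-s) ^ (2:ℕ) = s * s := by ring
        _ = 1 := hs2
    have h6 : A ^ (2 * e) = -1 := by
      rw [zpow_mul, hA2', hodd.neg_one_zpow]
    rw [h5] at h6
    norm_num at h6
  have hafq : a - f = 1 / A + 1 / A ^ 3 := by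
    have expand : a - f = (2 - s * s) * (A ^ 3)⁻¹ + (s * s) * A⁻¹ := by
      rw [ha, hf, h1, h2]; ring
    rw [expand, hs2]
    field_simp
    ring
  have hbhq : b - h = -A ^ 3 - A := by
    have expand : b - h = -2 * A ^ 3 + (-2 * (s * s)) * A + (s * s) * A ^ 3
        + (s * s) * A := by
      rw [hb, hh, h3, h4]; ring
    rw [expand, hs2]; ring
  refine ⟨hafq, ?_, hbhq, ?_⟩
  · rw [hafq]
    intro hc
    apply hA2
    have h7 : A ^ 2 + 1 = A ^ 3 * (1 / A + 1 / A ^ 3) := by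
      field_simp
    rw [hc, mul_zero] at h7
    exact h7
  · rw [hbhq]
    intro hc
    apply hA2
    have : A * (A ^ 2 + 1) = 0 := by linear_combination -hc
    rcases mul_eq_zero.1 this with h | h
    · exact absurd h hA
    · exact h
end

section
/- Every critical point of the del Pezzo superpotential W(x₁,…,xₙ) = Σⱼ xⱼ + Σⱼ 1/xⱼ + Πⱼ xⱼ + Πⱼ 1/xⱼ on (ℂ*)^n, with n even, is non-degenerate: the Hessian matrix (∂²W/∂xⱼ∂xₖ) is invertible at every critical point. -/
/-- Partial derivative of `f` at `x` in the `i`-th coordinate direction. -/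
noncomputable def pgrad {n : ℕ} (f : (Fin n → ℂ) → ℂ) (x : Fin n → ℂ)
    (i : Fin n) : ℂ :=
  fderiv ℂ f x (Pi.single i 1)

/-- Hessian matrix of second partial derivatives of `f` at `x`. -/
noncomputable def pHess {n : ℕ} (f : (Fin n → ℂ) → ℂ) (x : Fin n → ℂ) :
    Matrix (Fin n) (Fin n) ℂ :=
  Matrix.of fun i j => fderiv ℂ (fun y => pgrad f y j) x (Pi.single i 1)

/-!
Write `P = ∏ xₖ`. Then `∂ⱼW = 1 - xⱼ⁻² + (P - P⁻¹) xⱼ⁻¹`, so at a critical point every coordinate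
satisfies `xⱼ - xⱼ⁻¹ = P⁻¹ - P`, whence `(xⱼ + xⱼ⁻¹)² = (P + P⁻¹)²`. The Hessian is a diagonal
matrix plus the rank-one matrix `(P + P⁻¹) x⁻¹ (x⁻¹)ᵀ`, and the matrix determinant lemma reduces
its determinant, up to a nonzero factor, to `1 + ∑ⱼ sⱼ` with signs
`sⱼ = (P + P⁻¹)/(xⱼ + xⱼ⁻¹) = ±1`. For even `n` this is an odd integer. The one thing to
exclude is `P + P⁻¹ = 0`: then every `xⱼ` equals `P⁻¹` with `P⁻² = -1`, so
`P = (P⁻²)^(n/2) = ±1`, which is absurd.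
-/

open Finset Matrix Filter Topology

section Algebra

variable {K ι : Type*} [Field K]

theorem prod_erase_eq_mul_inv [DecidableEq ι] {s : Finset ι} {y : ι → K} {j : ι} (hj : j ∈ s)
    (hy : y j ≠ 0) : ∏ k ∈ s.erase j, y k = (∏ k ∈ s, y k) * (y j)⁻¹ := by
  rw [← mul_prod_erase s y hj, mul_comm, inv_mul_cancel_left₀ hy]

theorem Matrix.det_diagonal_add_vecMulVec [Fintype ι] [DecidableEq ι] {a : ι → K}
    (ha : ∀ i, a i ≠ 0) (w v : ι → K) :
    (diagonal a + vecMulVec w v).det = (∏ i, a i) * (1 + ∑ i, v i * w i / a i) := by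
  have hfac : diagonal a + vecMulVec w v = diagonal a * (1 + vecMulVec (w / a) v) := by
    ext i j
    by_cases hij : i = j <;>
      simp [hij, vecMulVec_apply, mul_add, ← mul_assoc, mul_div_cancel₀ _ (ha _)]
  rw [hfac, det_mul, det_diagonal, vecMulVec_eq Unit, det_one_add_replicateCol_mul_replicateRow]
  simp [dotProduct, mul_div_assoc]

theorem one_add_sum_ne_zero_of_sq_eq_one [Fintype ι] [CharZero K] (hι : Even (Fintype.card ι))
    {s : ι → K} (hs : ∀ i, s i ^ 2 = 1) : 1 + ∑ i, s i ≠ 0 := by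
  classical
  have hsign : ∀ i, s i = 1 - 2 * if s i = -1 then 1 else 0 := fun i => by
    rcases sq_eq_one_iff.1 (hs i) with h | h <;> norm_num [h]
  obtain ⟨m, hm⟩ := hι
  have hsum : 1 + ∑ i, s i = ((1 + 2 * m - 2 * #{i | s i = -1} : ℤ) : K) := by
    rw [Fintype.sum_congr _ _ hsign, sum_sub_distrib, ← mul_sum, sum_boole]
    push_cast [sum_const, card_univ, hm, nsmul_eq_mul]
    ring
  rw [hsum, Int.cast_ne_zero]
  omega

theorem sub_inv_eq_inv_sub_of_eq_zero {t p : K} (ht : t ≠ 0)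
    (h : 1 - t⁻¹ ^ 2 + (p - p⁻¹) * t⁻¹ = 0) : t - t⁻¹ = p⁻¹ - p := by
  linear_combination t * h + (t⁻¹ - p + p⁻¹) * mul_inv_cancel₀ ht

theorem add_inv_sq_eq_of_sub_inv_eq {t p : K} (ht : t ≠ 0) (hp : p ≠ 0)
    (h : t - t⁻¹ = p⁻¹ - p) : (t + t⁻¹) ^ 2 = (p + p⁻¹) ^ 2 := by
  linear_combination (t - t⁻¹ + p⁻¹ - p) * h + 4 * mul_inv_cancel₀ ht - 4 * mul_inv_cancel₀ hp

theorem prod_add_inv_ne_zero [Fintype ι] [CharZero K] (hι : Even (Fintype.card ι)) {x : ι → K}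
    (hx : ∀ i, x i ≠ 0) (h : ∀ i, x i - (x i)⁻¹ = (∏ k, x k)⁻¹ - ∏ k, x k) :
    ∏ k, x k + (∏ k, x k)⁻¹ ≠ 0 := by
  set P := ∏ k, x k
  have hP : P ≠ 0 := prod_ne_zero_iff.2 fun i _ => hx i
  intro hc
  have hPsq : P⁻¹ ^ 2 = -1 := by
    linear_combination P⁻¹ * hc - mul_inv_cancel₀ hP
  have hxP : ∀ i, x i = P⁻¹ := fun i => by
    have hu : x i + (x i)⁻¹ = 0 := by
      simpa [hc] using add_inv_sq_eq_of_sub_inv_eq (hx i) hP (h i)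
    linear_combination (h i + hu - hc) / 2
  obtain ⟨m, hm⟩ := hι
  have hPm : P = (-1) ^ m := by
    calc P = ∏ _k : ι, P⁻¹ := prod_congr rfl fun k _ => hxP k
      _ = (P⁻¹ ^ 2) ^ m := by rw [prod_const, card_univ, hm, ← two_mul, pow_mul]
      _ = (-1) ^ m := by rw [hPsq]
  have hPsq' : P⁻¹ ^ 2 = 1 := by
    rw [hPm, inv_pow, ← pow_mul, pow_mul', neg_one_sq, one_pow, inv_one]
  rw [hPsq] at hPsq'
  norm_num at hPsq'

end Algebra

namespace DelPezzo

variable {n : ℕ}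

noncomputable def potential (x : Fin n → ℂ) : ℂ :=
  (∑ j, x j) + (∑ j, (x j)⁻¹) + (∏ j, x j) + (∏ j, (x j)⁻¹)

theorem potential_eq : (potential : (Fin n → ℂ) → ℂ) =
    fun y => (∑ j, y j) + (∑ j, (y j)⁻¹) + (∏ j, y j) + (∏ j, y j)⁻¹ := by
  funext y
  rw [potential, prod_inv_distrib]

theorem pgrad_potential {y : Fin n → ℂ} (hy : ∀ i, y i ≠ 0) (j : Fin n) :
    pgrad potential y j = 1 - (y j)⁻¹ ^ 2 + (∏ k, y k - (∏ k, y k)⁻¹) * (y j)⁻¹ := by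
  have hP0 : ∏ k, y k ≠ 0 := prod_ne_zero_iff.2 fun i _ => hy i
  have hP := hasFDerivAt_finsetProd (𝕜 := ℂ) (u := univ) (x := y)
  have hsum := HasFDerivAt.fun_sum (u := univ) fun k _ => hasFDerivAt_apply (𝕜 := ℂ) k y
  have hsum_inv := HasFDerivAt.fun_sum (u := univ) fun k _ =>
    (hasDerivAt_inv (hy k)).comp_hasFDerivAt y (hasFDerivAt_apply (𝕜 := ℂ) k y)
  have hPinv := (hasDerivAt_inv hP0).comp_hasFDerivAt y hP
  have hW : HasFDerivAt
      (fun y : Fin n → ℂ => (∑ j, y j) + (∑ j, (y j)⁻¹) + (∏ j, y j) + (∏ j, y j)⁻¹) _ y :=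
    ((hsum.add hsum_inv).add hP).add hPinv
  rw [pgrad, potential_eq, hW.fderiv]
  simp only [fun k => prod_erase_eq_mul_inv (mem_univ k) (hy k), _root_.add_apply,
    _root_.sum_apply, ContinuousLinearMap.proj_apply, Pi.single_apply, sum_ite_eq', mem_univ,
    if_true, _root_.smul_apply, smul_eq_mul, mul_ite, mul_one, mul_zero]
  field_simp
  ring

theorem pHess_potential {x : Fin n → ℂ} (hx : ∀ i, x i ≠ 0) :
    pHess potential x =
      diagonal (fun j => 2 * (x j)⁻¹ ^ 3 - (∏ k, x k - (∏ k, x k)⁻¹) * (x j)⁻¹ ^ 2)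
        + vecMulVec (fun i => (∏ k, x k + (∏ k, x k)⁻¹) * (x i)⁻¹) (fun j => (x j)⁻¹) := by
  ext i j
  have hP0 : ∏ k, x k ≠ 0 := prod_ne_zero_iff.2 fun i _ => hx i
  have hnear : (fun y => pgrad potential y j) =ᶠ[𝓝 x]
      fun y => 1 - (y j)⁻¹ ^ 2 + (∏ k, y k - (∏ k, y k)⁻¹) * (y j)⁻¹ := by
    filter_upwards [eventually_all.2 fun k =>
      (continuous_apply k).continuousAt.eventually_ne (hx k)] with y hy using pgrad_potential hy j
  have hv := (hasDerivAt_inv (hx j)).comp_hasFDerivAt x (hasFDerivAt_apply (𝕜 := ℂ) j x)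
  have hP := hasFDerivAt_finsetProd (𝕜 := ℂ) (u := univ) (x := x)
  have hPinv := (hasDerivAt_inv hP0).comp_hasFDerivAt x hP
  have hG : HasFDerivAt
      (fun y : Fin n → ℂ => 1 - (y j)⁻¹ ^ 2 + (∏ k, y k - (∏ k, y k)⁻¹) * (y j)⁻¹) _ x :=
    ((hasFDerivAt_const 1 x).sub (hv.pow 2)).add ((hP.sub hPinv).mul hv)
  rw [pHess, of_apply, hnear.fderiv_eq, hG.fderiv, Matrix.add_apply, vecMulVec_apply]
  simp only [Function.comp_apply, Nat.add_one_sub_one, pow_one, nsmul_eq_mul, Nat.cast_ofNat,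
    Pi.sub_apply, _root_.zero_apply, _root_.add_apply, _root_.sub_apply, _root_.smul_apply,
    _root_.sum_apply, ContinuousLinearMap.proj_apply, smul_eq_mul, Pi.single_apply, mul_ite,
    mul_one, mul_zero, sum_ite_eq', mem_univ, if_true,
    fun k => prod_erase_eq_mul_inv (mem_univ k) (hx k)]
  rcases eq_or_ne i j with rfl | hij
  · simp only [diagonal_apply_eq, if_pos]
    field_simp [hx i]
    ring
  · simp only [diagonal_apply_ne _ hij, if_neg hij.symm]
    field_simp
    ring

theorem det_pHess_potential {x : Fin n → ℂ} (hx : ∀ i, x i ≠ 0)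
    (hcrit : ∀ j, x j - (x j)⁻¹ = (∏ k, x k)⁻¹ - ∏ k, x k) (hu : ∀ j, x j + (x j)⁻¹ ≠ 0) :
    (pHess potential x).det = (∏ j, (x j)⁻¹ ^ 2 * (x j + (x j)⁻¹))
      * (1 + ∑ j, (∏ k, x k + (∏ k, x k)⁻¹) / (x j + (x j)⁻¹)) := by
  have hdiag : ∀ j, 2 * (x j)⁻¹ ^ 3 - (∏ k, x k - (∏ k, x k)⁻¹) * (x j)⁻¹ ^ 2
      = (x j)⁻¹ ^ 2 * (x j + (x j)⁻¹) := fun j => by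
    linear_combination -(x j)⁻¹ ^ 2 * hcrit j
  have ha : ∀ j, (x j)⁻¹ ^ 2 * (x j + (x j)⁻¹) ≠ 0 := fun j =>
    mul_ne_zero (pow_ne_zero 2 (inv_ne_zero (hx j))) (hu j)
  simp_rw [pHess_potential hx, hdiag, det_diagonal_add_vecMulVec ha]
  congr 2
  refine sum_congr rfl fun j _ => ?_
  field_simp [hx j, hu j]

end DelPezzo

theorem stmt_15_general (n : ℕ) (hn : Even n)
    (W : (Fin n → ℂ) → ℂ)
    (hW : ∀ x, W x = (∑ j, x j) + (∑ j, (x j)⁻¹) + (∏ j, x j) + (∏ j, (x j)⁻¹))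
    (x : Fin n → ℂ) (hx : ∀ i, x i ≠ 0)
    (hcrit : ∀ i, pgrad W x i = 0) :
    (pHess W x).det ≠ 0 := by
  obtain rfl : W = DelPezzo.potential := funext hW
  set P := ∏ k, x k
  have hP : P ≠ 0 := prod_ne_zero_iff.2 fun i _ => hx i
  have hsub : ∀ j, x j - (x j)⁻¹ = P⁻¹ - P := fun j =>
    sub_inv_eq_inv_sub_of_eq_zero (hx j) (DelPezzo.pgrad_potential hx j ▸ hcrit j)
  have hsq : ∀ j, (x j + (x j)⁻¹) ^ 2 = (P + P⁻¹) ^ 2 := fun j =>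
    add_inv_sq_eq_of_sub_inv_eq (hx j) hP (hsub j)
  have hc : P + P⁻¹ ≠ 0 := prod_add_inv_ne_zero (by simpa using hn) hx hsub
  have hu : ∀ j, x j + (x j)⁻¹ ≠ 0 := fun j h => hc (by simpa [h] using (hsq j).symm)
  rw [DelPezzo.det_pHess_potential hx hsub hu]
  refine mul_ne_zero (prod_ne_zero_iff.2 fun j _ => ?_) (one_add_sum_ne_zero_of_sq_eq_one
    (by simpa using hn) fun j => by rw [div_pow, hsq j, div_self (pow_ne_zero 2 hc)])
  exact mul_ne_zero (pow_ne_zero 2 (inv_ne_zero (hx j))) (hu j)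

/-- every critical point of the del Pezzo superpotential
`W(x) = Σ xⱼ + Σ 1/xⱼ + Π xⱼ + Π 1/xⱼ` on `(ℂ*)^n`, `n` even positive,
is non-degenerate. -/
theorem stmt_15 (n : ℕ) (hn : Even n) (hpos : 0 < n)
    (W : (Fin n → ℂ) → ℂ)
    (hW : ∀ x, W x = (∑ j, x j) + (∑ j, (x j)⁻¹) + (∏ j, x j) + (∏ j, (x j)⁻¹))
    (x : Fin n → ℂ) (hx : ∀ i, x i ≠ 0)
    (hcrit : ∀ i, pgrad W x i = 0) :
    (pHess W x).det ≠ 0 :=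
  stmt_15_general n hn W hW x hx hcrit
end

section
/- Let n be even, 0 ≤ L ≤ n, and A ∈ ℂ* satisfy A − 1/A = (−1)^L A^(2L−n) (the critical point equation for the pseudo del Pezzo superpotential). If additionally A² = 3 or A² = 1/3 (the conditions a−f = 0 or b−h = 0 respectively, where a = 2/A³, f = (−1)^L A^(2L−n−2), b = −2A³, h = (−1)^L A^(2L−n+2)), then a contradiction follows; hence a − f ≠ 0 and b − h ≠ 0 at every such critical value A. -/
lemma three_zpow_ne (k : ℤ) : (3:ℂ)^k ≠ 4/3 := by
  intro hk
  have hr : (3:ℝ)^k = 4/3 := by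
    have : ((3:ℝ)^k : ℂ) = ((4/3 : ℝ) : ℂ) := by push_cast; exact hk
    exact_mod_cast this
  have h13 : (1:ℝ) < 3 := by norm_num
  have h1 : (3:ℝ)^(0:ℤ) < 3^k := by rw [hr]; norm_num
  have h2 : (3:ℝ)^k < 3^(1:ℤ) := by rw [hr]; norm_num
  have k1 : (0:ℤ) < k := (zpow_lt_zpow_iff_right₀ h13).mp h1
  have k2 : k < 1 := (zpow_lt_zpow_iff_right₀ h13).mp h2
  omega

/-- if `A ∈ ℂ*` satisfies the pseudo del Pezzo critical point
equation `A − 1/A = (−1)^L A^(2L−n)` (`n` even, `0 ≤ L ≤ n`), then with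
`a = 2/A³`, `f = (−1)^L A^(2L−n−2)`, `b = −2A³`, `h = (−1)^L A^(2L−n+2)`,
one has `a − f ≠ 0` and `b − h ≠ 0`. -/
theorem stmt_18 (n L : ℕ) (hn : Even n) (hL : L ≤ n) (A : ℂ) (hA : A ≠ 0)
    (hcrit : A - 1 / A = (-1 : ℂ) ^ L * A ^ (2 * (L : ℤ) - n))
    (a b f h : ℂ)
    (ha : a = 2 / A ^ 3) (hf : f = (-1 : ℂ) ^ L * A ^ (2 * (L : ℤ) - n - 2))
    (hb : b = -2 * A ^ 3) (hh : h = (-1 : ℂ) ^ L * A ^ (2 * (L : ℤ) - n + 2)) :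
    a - f ≠ 0 ∧ b - h ≠ 0 := by
  set m : ℤ := 2 * (L : ℤ) - n with hm
  have hA2 : (A:ℂ)^2 ≠ 0 := pow_ne_zero _ hA
  have hA3 : (A:ℂ)^3 ≠ 0 := pow_ne_zero _ hA
  have e2 : A ^ ((2:ℕ):ℤ) = A ^ (2:ℕ) := zpow_natCast A 2
  have ekey : (A^2)^m = (A^m)^2 := by
    rw [← zpow_natCast A 2, ← zpow_mul, mul_comm, zpow_mul, zpow_natCast]
  -- squared critical equation
  have hsq : (A - 1/A)^2 = (A^2)^m := by
    rw [hcrit, mul_pow, ← pow_mul, mul_comm L 2, pow_mul, ekey]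
    norm_num
  -- A² ≠ 3
  have h3 : A^2 ≠ 3 := by
    intro hA23
    have : ((3:ℂ))^m = 4/3 := by
      rw [← hA23, ← hsq]
      have : (A - 1/A)^2 = (A^2 - 1)^2 / A^2 := by field_simp
      rw [this, hA23]; norm_num
    exact three_zpow_ne m this
  -- A² ≠ 1/3
  have h13 : A^2 ≠ 1/3 := by
    intro hA23
    have : ((3:ℂ))^(-m) = 4/3 := by
      have e1 : (A^2)^m = (3:ℂ)⁻¹^m := by rw [hA23]; norm_num
      have e3 : (A - 1/A)^2 = (A^2 - 1)^2 / A^2 := by field_simp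
      rw [zpow_neg, ← inv_zpow, ← e1, ← hsq, e3, hA23]
      norm_num
    exact three_zpow_ne (-m) this
  have hf' : f = (A - 1/A) / A^2 := by
    rw [hf, hcrit, zpow_sub₀ hA, mul_div_assoc]
    norm_cast
  have hh' : h = (A - 1/A) * A^2 := by
    rw [hh, hcrit, zpow_add₀ hA, mul_assoc]
    norm_cast
  constructor
  · intro h0
    apply h3
    have key : a - f = (3 - A^2) / A^3 := by
      rw [ha, hf']; field_simp; ring
    rw [key, div_eq_zero_iff] at h0
    rcases h0 with h0 | h0
    · linear_combination -h0
    · exact absurd h0 hA3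
  · intro h0
    apply h13
    have key : b - h = A * (1 - 3 * A^2) := by
      rw [hb, hh']; field_simp; ring
    rw [key, mul_eq_zero] at h0
    rcases h0 with h0 | h0
    · exact absurd h0 hA
    · rw [eq_div_iff (by norm_num : (3:ℂ) ≠ 0)]
      linear_combination -h0
end

section
/- For n even, 0 ≤ L ≤ n, and A ∈ ℂ* satisfying A − 1/A = (−1)^L A^(2L−n), the expression (a + (L−1)f)(b + (n−L−1)h) − d²·L·(n−L), with a = 2/A³, b = −2A³, f = (−1)^L A^(2L−n−2), h = (−1)^L A^(2L−n+2), d = (−1)^(L−1) A^(2L−n), equals (3−2L−n)A⁴ + 2(2n−5)A² + (3+2L−3n), after multiplying through by A² and using the critical point relation. -/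
lemma stmt_19_aux (l m A : ℂ) (hA : A ≠ 0) :
    A ^ 2 * ((2 / A ^ 3 + (l - 1) * ((A ^ 2 - 1) / A ^ 3)) *
        (-2 * A ^ 3 + (m - l - 1) * ((A ^ 2 - 1) * A))
        - ((A ^ 2 - 1) ^ 2 / A ^ 2) * l * (m - l))
      = (3 - 2 * l - m) * A ^ 4 + 2 * (2 * m - 5) * A ^ 2 + (3 + 2 * l - 3 * m) := by
  field_simp
  ring

/-- for `A ∈ ℂ*` satisfying the pseudo del Pezzo critical point
equation `A − 1/A = (−1)^L A^(2L−n)` (`n` even, `0 ≤ L ≤ n`), the final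
Hessian factor `(a + (L−1)f)(b + (n−L−1)h) − d²·L·(n−L)`, multiplied by `A²`,
equals `(3−2L−n)A⁴ + 2(2n−5)A² + (3+2L−3n)`. -/
theorem stmt_19 (n L : ℕ) (hn : Even n) (hL : L ≤ n) (A : ℂ) (hA : A ≠ 0)
    (hcrit : A - 1 / A = (-1 : ℂ) ^ L * A ^ (2 * (L : ℤ) - n))
    (a b f h d : ℂ)
    (ha : a = 2 / A ^ 3) (hb : b = -2 * A ^ 3)
    (hf : f = (-1 : ℂ) ^ L * A ^ (2 * (L : ℤ) - n - 2))
    (hh : h = (-1 : ℂ) ^ L * A ^ (2 * (L : ℤ) - n + 2))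
    (hd : d = (-1 : ℂ) ^ (L + 1) * A ^ (2 * (L : ℤ) - n)) :
    A ^ 2 * ((a + ((L : ℂ) - 1) * f) * (b + ((n : ℂ) - (L : ℂ) - 1) * h)
        - d ^ 2 * (L : ℂ) * ((n : ℂ) - (L : ℂ)))
      = ((3 : ℂ) - 2 * (L : ℂ) - (n : ℂ)) * A ^ 4
        + 2 * (2 * (n : ℂ) - 5) * A ^ 2
        + ((3 : ℂ) + 2 * (L : ℂ) - 3 * (n : ℂ)) := by
  have hC : (-1 : ℂ) ^ L * A ^ (2 * (L : ℤ) - n) = (A ^ 2 - 1) / A := by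
    rw [← hcrit, eq_div_iff hA, sub_mul, one_div, inv_mul_cancel₀ hA]
    ring
  have hf' : f = (A ^ 2 - 1) / A ^ 3 := by
    rw [hf, zpow_sub₀ hA, ← mul_div_assoc, hC, zpow_two, div_div]
    congr 1
    ring
  have hh' : h = (A ^ 2 - 1) * A := by
    rw [hh, zpow_add₀ hA, ← mul_assoc, hC, zpow_two, ← mul_assoc, div_mul_cancel₀ _ hA]
  have hd' : d ^ 2 = (A ^ 2 - 1) ^ 2 / A ^ 2 := by
    have : d = -((A ^ 2 - 1) / A) := by
      rw [hd, pow_succ, mul_comm ((-1:ℂ)^L) (-1), mul_assoc, hC]; ring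
    rw [this, neg_sq, div_pow]
  rw [ha, hb, hf', hh', hd']
  exact stmt_19_aux (L : ℂ) (n : ℂ) A hA
end
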